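/- For an integer n ≥ 0 and a ∈ ℝ, let A_n(a) = ∫₀^{2π} e^{a cos u} cos(nu) du. Then: (i) for every n ≥ 0 and every a ∈ ℝ, A_n(a) = 2π Σ_{k=0}^∞ (a/2)^{2k+n} / (k! (k+n)!), i.e. A_n(a) equals 2π times the modified Bessel function I_n(a); (ii) for every n ≥ 1 and every a with 0 ≤ a ≤ √n, one has (2π/n!) (a/2)^n ≤ A_n(a) ≤ (2π/n!) (a/2)^n (1 + a²/(2n)). (Paper's Lemma D.1, with the uniform error bound made explicit.) -/

import Mathlib

/-!
Expanding `e^{a cos u}` in its power series and integrating termwise (the series is dominated by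
`e^{|a|}`) reduces `A_n(a)` to the moments `∫₀^{2π} cos^m u · cos(nu) du`. Writing
`cos u = (e^{iu} + e^{-iu})/2` and using orthogonality of the characters `e^{iku}` on `[0, 2π]`,
the moment vanishes unless `m = 2k + n`, where it equals `2π C(2k+n, k) / 2^{2k+n}`; since
`C(2k+n, k) k! (k+n)! = (2k+n)!`, this is the Bessel series.

For `a ≥ 0` the terms are nonnegative, so the term `k = 0` is a lower bound. For the upper bound,
`(k+n)! ≥ n! (n+1)^k` dominates the series by `(a/2)^n / n! · exp((a/2)²/(n+1))`, and
`e^x ≤ 1 + 2x` on `[0, 1]`.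
-/

open MeasureTheory Finset Real

noncomputable section

/-- `A_n(a) = ∫₀^{2π} e^{a cos u} cos(nu) du`. -/
def Afun (n : ℕ) (a : ℝ) : ℝ :=
  ∫ u in (0 : ℝ)..(2 * Real.pi), Real.exp (a * Real.cos u) * Real.cos (n * u)

theorem integral_exp_int_mul_I_mul (k : ℤ) :
    ∫ u in (0 : ℝ)..2 * π, Complex.exp (k * Complex.I * u) =
      if k = 0 then (2 * π : ℂ) else 0 := by
  split_ifs with hk
  · simp [hk]
  · have hperiod : Complex.exp (k * Complex.I * (2 * π : ℝ)) = 1 := by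
      rw [show (k : ℂ) * Complex.I * (2 * π : ℝ) = k * (2 * π * Complex.I) by push_cast; ring]
      exact Complex.exp_int_mul_two_pi_mul_I k
    rw [integral_exp_mul_complex (by simp [hk]), hperiod]
    simp

theorem ofReal_cos_pow_eq_sum (m : ℕ) (u : ℝ) :
    (Real.cos u : ℂ) ^ m = ∑ j ∈ range (m + 1),
      (m.choose j : ℂ) / 2 ^ m * Complex.exp ((2 * j - m : ℤ) * Complex.I * u) := by
  rw [Complex.ofReal_cos, Complex.cos, div_pow, add_pow, sum_div]
  refine sum_congr rfl fun j hj => ?_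
  have hjm : j ≤ m := Nat.lt_succ_iff.mp (mem_range.mp hj)
  rw [← Complex.exp_nat_mul, ← Complex.exp_nat_mul, ← Complex.exp_add]
  push_cast [Nat.cast_sub hjm]
  ring_nf

theorem integral_cos_pow_mul_exp (m n : ℕ) :
    ∫ u in (0 : ℝ)..2 * π, (Real.cos u : ℂ) ^ m * Complex.exp (n * Complex.I * u) =
      2 * π / 2 ^ m * ∑ j ∈ range (m + 1), if 2 * j + n = m then (m.choose j : ℂ) else 0 := by
  have hexpand : ∀ u : ℝ, (Real.cos u : ℂ) ^ m * Complex.exp (n * Complex.I * u) =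
      ∑ j ∈ range (m + 1),
        (m.choose j : ℂ) / 2 ^ m * Complex.exp ((2 * j - m + n : ℤ) * Complex.I * u) := by
    intro u
    rw [ofReal_cos_pow_eq_sum, sum_mul]
    refine sum_congr rfl fun j _ => ?_
    rw [mul_assoc, ← Complex.exp_add]
    push_cast
    ring_nf
  simp_rw [hexpand]
  rw [intervalIntegral.integral_finsetSum
    fun j _ => (by fun_prop : Continuous _).intervalIntegrable _ _, mul_sum]
  refine sum_congr rfl fun j _ => ?_
  rw [intervalIntegral.integral_const_mul, integral_exp_int_mul_I_mul]
  have hcond : (2 * j - m + n : ℤ) = 0 ↔ 2 * j + n = m := by omega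
  rw [if_congr hcond rfl rfl]
  split_ifs <;> ring

theorem integral_cos_pow_mul_cos (m n : ℕ) :
    ∫ u in (0 : ℝ)..2 * π, Real.cos u ^ m * Real.cos (n * u) =
      2 * π / 2 ^ m * ∑ j ∈ range (m + 1), if 2 * j + n = m then (m.choose j : ℝ) else 0 := by
  have hre : ∀ u : ℝ, Real.cos u ^ m * Real.cos (n * u) =
      ((Real.cos u : ℂ) ^ m * Complex.exp (n * Complex.I * u)).re := by
    intro u
    rw [← Complex.ofReal_pow, Complex.re_ofReal_mul,
      show (n : ℂ) * Complex.I * u = (n * u : ℝ) * Complex.I by push_cast; ring,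
      Complex.exp_ofReal_mul_I_re]
  have hcomm := intervalIntegral.intervalIntegral_re (𝕜 := ℂ) (μ := volume) (a := 0) (b := 2 * π)
    ((by fun_prop : Continuous fun u : ℝ =>
      (Real.cos u : ℂ) ^ m * Complex.exp (n * Complex.I * u)).intervalIntegrable _ _)
  simp only [RCLike.re_to_complex] at hcomm
  simp_rw [hre, hcomm, integral_cos_pow_mul_exp]
  norm_cast
  rw [Complex.re_ofReal_mul, Complex.natCast_re]

theorem integral_cos_pow_two_mul_add_mul_cos (k n : ℕ) :
    ∫ u in (0 : ℝ)..2 * π, Real.cos u ^ (2 * k + n) * Real.cos (n * u) =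
      2 * π / 2 ^ (2 * k + n) * (2 * k + n).choose k := by
  have hcond : ∀ j, 2 * j + n = 2 * k + n ↔ j = k := fun j => by omega
  simp_rw [integral_cos_pow_mul_cos, hcond, sum_ite_eq', mem_range]
  rw [if_pos (by omega)]

theorem integral_cos_pow_mul_cos_eq_zero {m n : ℕ} (hm : m ∉ Set.range (2 * · + n)) :
    ∫ u in (0 : ℝ)..2 * π, Real.cos u ^ m * Real.cos (n * u) = 0 := by
  rw [integral_cos_pow_mul_cos, sum_eq_zero, mul_zero]
  intro j _
  rw [if_neg fun h => hm ⟨j, h⟩]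

theorem hasSum_Afun_cos_pow (n : ℕ) (a : ℝ) :
    HasSum (fun m : ℕ => a ^ m / m.factorial *
      ∫ u in (0 : ℝ)..2 * π, Real.cos u ^ m * Real.cos (n * u)) (Afun n a) := by
  simp_rw [← intervalIntegral.integral_const_mul]
  refine intervalIntegral.hasSum_integral_of_dominated_convergence
    (fun m _ => |a| ^ m / m.factorial) (fun m => (by fun_prop : Continuous _).aestronglyMeasurable)
    (fun m => ae_of_all _ fun u _ => ?_) (ae_of_all _ fun u _ => ?_)
    intervalIntegrable_const (ae_of_all _ fun u _ => ?_)
  · have hcos : |Real.cos u| ^ m * |Real.cos (n * u)| ≤ 1 :=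
      mul_le_one₀ (pow_le_one₀ (abs_nonneg _) (abs_cos_le_one u)) (abs_nonneg _)
        (abs_cos_le_one _)
    rw [Real.norm_eq_abs, abs_mul, abs_mul, abs_div, abs_pow, abs_pow, Nat.abs_cast]
    exact mul_le_of_le_one_right (by positivity) hcos
  · exact Real.summable_pow_div_factorial |a|
  · have h := (NormedSpace.expSeries_div_hasSum_exp (a * Real.cos u)).mul_right (Real.cos (n * u))
    rw [← Real.exp_eq_exp_ℝ] at h
    have hterm : (fun m : ℕ => a ^ m / m.factorial * (Real.cos u ^ m * Real.cos (n * u))) =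
        fun m => (a * Real.cos u) ^ m / m.factorial * Real.cos (n * u) := funext fun m => by ring
    rw [hterm]
    exact h

def besselI (n : ℕ) (a : ℝ) : ℝ :=
  ∑' k : ℕ, (a / 2) ^ (2 * k + n) / ((k.factorial : ℝ) * ((k + n).factorial : ℝ))

theorem hasSum_Afun (n : ℕ) (a : ℝ) :
    HasSum (fun k : ℕ => 2 * π *
      ((a / 2) ^ (2 * k + n) / ((k.factorial : ℝ) * ((k + n).factorial : ℝ)))) (Afun n a) := by
  have hinj : Function.Injective (2 * · + n) := fun k l h => by simp only at h; omega
  refine ((hinj.hasSum_iff fun m hm => ?_).mpr (hasSum_Afun_cos_pow n a)).congr_fun fun k => ?_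
  · rw [integral_cos_pow_mul_cos_eq_zero hm, mul_zero]
  · have hchoose : ((2 * k + n).choose k : ℝ) ≠ 0 := by
      exact_mod_cast (Nat.choose_pos (by omega)).ne'
    have hfac : ((2 * k + n).factorial : ℝ) =
        (2 * k + n).choose k * (k + n).factorial * k.factorial := by
      have h := Nat.add_choose_mul_factorial_mul_factorial (k + n) k
      rw [show k + n + k = 2 * k + n by ring] at h
      exact_mod_cast h.symm
    rw [Function.comp_apply, integral_cos_pow_two_mul_add_mul_cos, hfac, div_pow]
    field_simp

theorem Afun_eq_two_pi_mul_besselI (n : ℕ) (a : ℝ) : Afun n a = 2 * π * besselI n a := by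
  rw [← (hasSum_Afun n a).tsum_eq, tsum_mul_left, besselI]

theorem besselI_term_le (n : ℕ) {a : ℝ} (ha : 0 ≤ a) (k : ℕ) :
    (a / 2) ^ (2 * k + n) / ((k.factorial : ℝ) * ((k + n).factorial : ℝ)) ≤
      (a / 2) ^ n / n.factorial * (((a / 2) ^ 2 / (n + 1)) ^ k / k.factorial) := by
  have hfac : (n.factorial : ℝ) * (n + 1) ^ k ≤ (k + n).factorial := by
    rw [add_comm k n]
    exact_mod_cast Nat.factorial_mul_pow_le_factorial
  calc (a / 2) ^ (2 * k + n) / ((k.factorial : ℝ) * ((k + n).factorial : ℝ))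
      ≤ (a / 2) ^ (2 * k + n) / (k.factorial * (n.factorial * (n + 1) ^ k)) := by gcongr
    _ = (a / 2) ^ n / n.factorial * (((a / 2) ^ 2 / (n + 1)) ^ k / k.factorial) := by
      rw [pow_add, pow_mul, div_pow _ ((n : ℝ) + 1)]
      field_simp

theorem summable_besselI_term (n : ℕ) {a : ℝ} (ha : 0 ≤ a) :
    Summable fun k : ℕ => (a / 2) ^ (2 * k + n) / ((k.factorial : ℝ) * ((k + n).factorial : ℝ)) :=
  .of_nonneg_of_le (fun k => by positivity) (besselI_term_le n ha)
    ((Real.summable_pow_div_factorial _).mul_left _)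

theorem pow_div_factorial_le_besselI (n : ℕ) {a : ℝ} (ha : 0 ≤ a) :
    (a / 2) ^ n / n.factorial ≤ besselI n a := by
  have h := (summable_besselI_term n ha).le_tsum 0 fun k _ => by positivity
  rw [besselI]
  simpa using h

theorem besselI_le_mul_exp (n : ℕ) {a : ℝ} (ha : 0 ≤ a) :
    besselI n a ≤ (a / 2) ^ n / n.factorial * Real.exp ((a / 2) ^ 2 / (n + 1)) := by
  rw [Real.exp_eq_exp_ℝ, ← (NormedSpace.expSeries_div_hasSum_exp _).tsum_eq, ← tsum_mul_left]
  exact (summable_besselI_term n ha).tsum_le_tsum (besselI_term_le n ha)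
    ((Real.summable_pow_div_factorial _).mul_left _)

theorem exp_le_one_add_two_mul {x : ℝ} (hx₀ : 0 ≤ x) (hx₁ : x ≤ 1) : Real.exp x ≤ 1 + 2 * x := by
  have h := Real.abs_exp_sub_one_sub_id_le (abs_le.mpr ⟨by linarith, hx₁⟩)
  nlinarith [le_abs_self (Real.exp x - 1 - x)]

theorem besselI_le_mul_one_add {n : ℕ} (hn : 1 ≤ n) {a : ℝ} (ha : 0 ≤ a)
    (ha2 : a ^ 2 ≤ 4 * (n + 1)) :
    besselI n a ≤ (a / 2) ^ n / n.factorial * (1 + a ^ 2 / (2 * n)) := by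
  have hn' : (1 : ℝ) ≤ n := by exact_mod_cast hn
  have hx₀ : 0 ≤ (a / 2) ^ 2 / (n + 1) := by positivity
  have hx₁ : (a / 2) ^ 2 / (n + 1) ≤ 1 := by
    rw [div_le_one (by positivity)]
    linarith
  have hx : 2 * ((a / 2) ^ 2 / (n + 1)) ≤ a ^ 2 / (2 * n) :=
    calc 2 * ((a / 2) ^ 2 / (n + 1)) = a ^ 2 / (2 * (n + 1)) := by field_simp
      _ ≤ a ^ 2 / (2 * n) := by gcongr; linarith
  calc besselI n a ≤ (a / 2) ^ n / n.factorial * Real.exp ((a / 2) ^ 2 / (n + 1)) :=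
        besselI_le_mul_exp n ha
    _ ≤ (a / 2) ^ n / n.factorial * (1 + a ^ 2 / (2 * n)) := by
        gcongr
        linarith [exp_le_one_add_two_mul hx₀ hx₁]

/-- **Lemma D.1 of the paper (with the uniform error bound made explicit).**
(i) `A_n(a) = 2π Σₖ (a/2)^{2k+n}/(k!(k+n)!)`, i.e. `A_n(a) = 2π I_n(a)` with `I_n` the modified
Bessel function; (ii) for `n ≥ 1` and `0 ≤ a ≤ √n`,
`(2π/n!)(a/2)^n ≤ A_n(a) ≤ (2π/n!)(a/2)^n (1 + a²/(2n))`. -/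
theorem Afun_bessel_expansion_and_bounds :
    (∀ (n : ℕ) (a : ℝ),
      Afun n a = 2 * Real.pi *
        ∑' k : ℕ, (a / 2) ^ (2 * k + n) / ((k.factorial : ℝ) * ((k + n).factorial : ℝ))) ∧
    (∀ n : ℕ, 1 ≤ n → ∀ a : ℝ, 0 ≤ a → a ≤ Real.sqrt n →
      (2 * Real.pi / (n.factorial : ℝ)) * (a / 2) ^ n ≤ Afun n a ∧
      Afun n a ≤ (2 * Real.pi / (n.factorial : ℝ)) * (a / 2) ^ n * (1 + a ^ 2 / (2 * n))) := by
  refine ⟨Afun_eq_two_pi_mul_besselI, fun n hn a ha hasqrt => ?_⟩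
  have ha2 : a ^ 2 ≤ n := by
    simpa [sq_sqrt (by positivity : (0 : ℝ) ≤ n)] using pow_le_pow_left₀ ha hasqrt 2
  rw [Afun_eq_two_pi_mul_besselI]
  constructor
  · calc 2 * π / n.factorial * (a / 2) ^ n = 2 * π * ((a / 2) ^ n / n.factorial) := by ring
      _ ≤ 2 * π * besselI n a := by gcongr; exact pow_div_factorial_le_besselI n ha
  · calc 2 * π * besselI n a ≤ 2 * π * ((a / 2) ^ n / n.factorial * (1 + a ^ 2 / (2 * n))) := by
          gcongr; exact besselI_le_mul_one_add hn ha (by linarith)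
      _ = 2 * π / n.factorial * (a / 2) ^ n * (1 + a ^ 2 / (2 * n)) := by ring

end
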